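/- Let κ₀, κ₁, κ₂ ∈ {−1, +1} with κ₁ ≠ κ₂. Then for all ξ, η ∈ ℝ⁴, the gradient ∇_η q_K(ξ, η) = −κ₁(ξ+η)/⟨ξ+η⟩ + κ₂ η/⟨η⟩ vanishes if and only if ξ = −2η; that is, the space resonant set of q_K is the plane {(ξ, η) : ξ = −2η}. -/
import Mathlib


/-- Japanese bracket `⟨x⟩ = √(1 + |x|²)` on `ℝ⁴`. -/
noncomputable def jb (x : EuclideanSpace ℝ (Fin 4)) : ℝ := Real.sqrt (1 + ‖x‖ ^ 2)

lemma jb_pos (x : EuclideanSpace ℝ (Fin 4)) : 0 < jb x :=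
  Real.sqrt_pos.mpr (by positivity)

lemma jb_sq (x : EuclideanSpace ℝ (Fin 4)) : jb x ^ 2 = 1 + ‖x‖ ^ 2 :=
  Real.sq_sqrt (by positivity)

lemma jb_neg (x : EuclideanSpace ℝ (Fin 4)) : jb (-x) = jb x := by
  simp [jb]

lemma jb_aux (a b : EuclideanSpace ℝ (Fin 4))
    (h : (1 / jb a) • a + (1 / jb b) • b = 0) : a + b = 0 := by
  have ha := jb_pos a
  have hb := jb_pos b
  have h1 : (1 / jb a) • a = -((1 / jb b) • b) := by
    rw [eq_neg_iff_add_eq_zero]; exact h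
  have h2 : (1 / jb a) * ‖a‖ = (1 / jb b) * ‖b‖ := by
    have := congrArg norm h1
    rwa [norm_neg, norm_smul, norm_smul, Real.norm_eq_abs, Real.norm_eq_abs,
      abs_of_pos (by positivity), abs_of_pos (by positivity)] at this
  have h3 : ‖a‖ * jb b = ‖b‖ * jb a := by
    field_simp at h2
    linarith
  have h4 : ‖a‖ = ‖b‖ := by
    have hsq : (‖a‖ * jb b) ^ 2 = (‖b‖ * jb a) ^ 2 := by rw [h3]
    rw [mul_pow, mul_pow, jb_sq, jb_sq] at hsq
    have hsq2 : ‖a‖ ^ 2 = ‖b‖ ^ 2 := by nlinarith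
    have hle1 : ‖a‖ ≤ ‖b‖ := by nlinarith [norm_nonneg a, norm_nonneg b]
    have hle2 : ‖b‖ ≤ ‖a‖ := by nlinarith [norm_nonneg a, norm_nonneg b]
    linarith
  have h5 : jb a = jb b := by unfold jb; rw [h4]
  rw [h5] at h
  have h6 : (1 / jb b) • (a + b) = 0 := by rw [smul_add]; exact h
  have h7 : (1 / jb b) ≠ 0 := by positivity
  exact (smul_eq_zero.mp h6).resolve_left h7

/-- If `κ₁ ≠ κ₂`, then for all `ξ, η ∈ ℝ⁴` the gradient
`∇_η q_K(ξ, η) = −κ₁(ξ+η)/⟨ξ+η⟩ + κ₂ η/⟨η⟩` vanishes iff `ξ = −2η`: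
the space resonant set of `q_K` is the plane `{(ξ, η) : ξ = −2η}`. -/
theorem maxwell_phase_space_resonant_set_nonres (κ₀ κ₁ κ₂ : ℝ)
    (h₀ : κ₀ = -1 ∨ κ₀ = 1) (h₁ : κ₁ = -1 ∨ κ₁ = 1) (h₂ : κ₂ = -1 ∨ κ₂ = 1)
    (hne : κ₁ ≠ κ₂)
    (ξ η : EuclideanSpace ℝ (Fin 4)) :
    (-κ₁ / jb (ξ + η)) • (ξ + η) + (κ₂ / jb η) • η = 0 ↔ ξ = (-2 : ℝ) • η := by
  have hκ : κ₂ = -κ₁ := by rcases h₁ with h | h <;> rcases h₂ with h' | h' <;> simp_all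
  subst hκ
  constructor
  · intro h
    have key : (1 / jb (ξ + η)) • (ξ + η) + (1 / jb η) • η = 0 := by
      rcases h₁ with hc | hc <;> subst hc
      · simpa using h
      · rw [neg_div, neg_div, neg_smul, neg_smul, ← neg_add, neg_eq_zero] at h
        exact h
    have hab := jb_aux _ _ key
    have : ξ + (η + η) = 0 := by rw [← add_assoc]; exact hab
    have hx : ξ = -(η + η) := eq_neg_of_add_eq_zero_left this
    rw [hx, neg_smul, two_smul]
  · intro h
    subst h
    have he : (-2 : ℝ) • η + η = -η := by
      have : (-2 : ℝ) • η = -(η + η) := by rw [neg_smul, two_smul]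
      rw [this]; abel
    rw [he, jb_neg, smul_neg]
    simp
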